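/- 18/(5π) = 1 + (5/36)∑_{n=0}^∞ (1/6)_n (5/6)_n/((n+1)!)^2. -/

import Mathlib

open Real

noncomputable def rising (x : ℝ) (n : ℕ) : ℝ := ∏ i ∈ Finset.range n, (x + i)

/-!
Write `tₙ = (a)ₙ (1 - a)ₙ / (n!)²` and `c = a (1 - a)`. Since `(n + a)(n + 1 - a) = n² + n + c`,
the sequence `dₙ = (n / c² + 1 / c) tₙ` telescopes: `dₙ₊₁ - dₙ = tₙ / (n + 1)²`, which is the
`n`-th term of the series. Euler's limit formula for `Γ` gives `n tₙ → 1 / (Γ(a) Γ(1 - a))`, which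
is `sin (π a) / π` by the reflection formula, so the series sums to `sin (π a) / (π c²) - 1 / c`.
Taking `a = 1 / 6` gives the theorem.
-/

open Filter Topology

lemma rising_succ (x : ℝ) (n : ℕ) : rising x (n + 1) = rising x n * (x + n) :=
  Finset.prod_range_succ _ _

lemma rising_pos {x : ℝ} (hx : 0 < x) (n : ℕ) : 0 < rising x n :=
  Finset.prod_pos fun _ _ => by positivity

lemma gammaSeq_eq_rising (a : ℝ) (n : ℕ) :
    GammaSeq a n = (n : ℝ) ^ a * n.factorial / (rising a n * (a + n)) := by
  rw [GammaSeq, Finset.prod_range_succ]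
  rfl

lemma tendsto_rising_div_factorial_mul_rpow {a : ℝ} (ha : 0 < a) :
    Tendsto (fun n : ℕ => rising a n / (n.factorial * (n : ℝ) ^ (a - 1))) atTop
      (𝓝 (Gamma a)⁻¹) := by
  have hlim := (tendsto_natCast_div_add_atTop a).mul
    ((GammaSeq_tendsto_Gamma a).inv₀ (Gamma_pos_of_pos ha).ne')
  rw [one_mul] at hlim
  refine hlim.congr' ?_
  filter_upwards [eventually_ge_atTop 1] with n hn
  have hn : (0 : ℝ) < n := by exact_mod_cast hn
  rw [gammaSeq_eq_rising, rpow_sub_one hn.ne']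
  field_simp
  ring

/-- The `n`-th coefficient of the hypergeometric series `₂F₁(a, 1 - a; 1; x)`. -/
noncomputable def hypergeomCoeff (a : ℝ) (n : ℕ) : ℝ :=
  rising a n * rising (1 - a) n / (n.factorial : ℝ) ^ 2

lemma tendsto_natCast_mul_hypergeomCoeff {a : ℝ} (ha : 0 < a) (ha1 : a < 1) :
    Tendsto (fun n : ℕ => n * hypergeomCoeff a n) atTop (𝓝 (sin (π * a) / π)) := by
  have hlim := (tendsto_rising_div_factorial_mul_rpow ha).mul
    (tendsto_rising_div_factorial_mul_rpow (sub_pos.2 ha1))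
  rw [← mul_inv, Gamma_mul_Gamma_one_sub, inv_div] at hlim
  refine hlim.congr' ?_
  filter_upwards [eventually_ge_atTop 1] with n hn
  have hn : (0 : ℝ) < n := by exact_mod_cast hn
  have hpow : (n : ℝ) ^ (a - 1) * (n : ℝ) ^ (1 - a - 1) = (n : ℝ)⁻¹ := by
    rw [← rpow_add hn, ← rpow_neg_one]
    ring_nf
  rw [hypergeomCoeff, div_mul_div_comm, mul_mul_mul_comm, hpow]
  field_simp

noncomputable def telescopingSeq (a : ℝ) (n : ℕ) : ℝ :=
  (n / (a * (1 - a)) ^ 2 + 1 / (a * (1 - a))) * hypergeomCoeff a n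

lemma telescopingSeq_succ_sub {a : ℝ} (hc : a * (1 - a) ≠ 0) (n : ℕ) :
    telescopingSeq a (n + 1) - telescopingSeq a n
      = rising a n * rising (1 - a) n / ((n + 1).factorial : ℝ) ^ 2 := by
  obtain ⟨ha, ha1⟩ := mul_ne_zero_iff.1 hc
  unfold telescopingSeq hypergeomCoeff
  rw [rising_succ, rising_succ, Nat.factorial_succ]
  push_cast
  field_simp
  ring

lemma tendsto_hypergeomCoeff_zero {a : ℝ} (ha : 0 < a) (ha1 : a < 1) :
    Tendsto (hypergeomCoeff a) atTop (𝓝 0) := by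
  have hlim := (tendsto_inv_atTop_zero.comp tendsto_natCast_atTop_atTop).mul
    (tendsto_natCast_mul_hypergeomCoeff ha ha1)
  rw [zero_mul] at hlim
  refine hlim.congr' ?_
  filter_upwards [eventually_ge_atTop 1] with n hn
  have hn : (n : ℝ) ≠ 0 := by positivity
  simp only [Function.comp_apply, inv_mul_cancel_left₀ hn]

lemma tendsto_telescopingSeq {a : ℝ} (ha : 0 < a) (ha1 : a < 1) :
    Tendsto (telescopingSeq a) atTop (𝓝 (sin (π * a) / (π * (a * (1 - a)) ^ 2))) := by
  have hlim := ((tendsto_natCast_mul_hypergeomCoeff ha ha1).div_const ((a * (1 - a)) ^ 2)).add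
    ((tendsto_hypergeomCoeff_zero ha ha1).const_mul (1 / (a * (1 - a))))
  rw [mul_zero, add_zero, div_div] at hlim
  refine hlim.congr fun n => ?_
  rw [telescopingSeq]
  ring

lemma hasSum_rising_mul_rising_one_sub_div_sq {a : ℝ} (ha : 0 < a) (ha1 : a < 1) :
    HasSum (fun n : ℕ => rising a n * rising (1 - a) n / ((n + 1).factorial : ℝ) ^ 2)
      (sin (π * a) / (π * (a * (1 - a)) ^ 2) - 1 / (a * (1 - a))) := by
  have hb : 0 < 1 - a := sub_pos.2 ha1
  have hnonneg (n : ℕ) :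
      0 ≤ rising a n * rising (1 - a) n / ((n + 1).factorial : ℝ) ^ 2 := by
    have := rising_pos ha n
    have := rising_pos hb n
    positivity
  have hzero : telescopingSeq a 0 = 1 / (a * (1 - a)) := by
    simp [telescopingSeq, hypergeomCoeff, rising]
  rw [hasSum_iff_tendsto_nat_of_nonneg hnonneg, ← hzero]
  refine ((tendsto_telescopingSeq ha ha1).sub_const _).congr fun N => ?_
  rw [← Finset.sum_range_sub]
  exact Finset.sum_congr rfl fun n _ => telescopingSeq_succ_sub (by positivity) n

theorem one_add_mul_tsum_rising_mul_rising_one_sub_div_sq {a : ℝ} (ha : 0 < a) (ha1 : a < 1) :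
    1 + a * (1 - a) *
      ∑' n : ℕ, rising a n * rising (1 - a) n / ((n + 1).factorial : ℝ) ^ 2
      = sin (π * a) / (π * (a * (1 - a))) := by
  have hb : 1 - a ≠ 0 := (sub_pos.2 ha1).ne'
  rw [(hasSum_rising_mul_rising_one_sub_div_sq ha ha1).tsum_eq]
  field_simp [ha.ne']
  ring

theorem stmt16 :
    18 / (5 * π) = 1 + (5/36) *
      ∑' n : ℕ, rising (1/6) n * rising (5/6) n / ((n + 1).factorial : ℝ) ^ 2 := by
  have h := one_add_mul_tsum_rising_mul_rising_one_sub_div_sq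
    (a := 1 / 6) (by norm_num) (by norm_num)
  rw [mul_one_div, sin_pi_div_six, show (1 : ℝ) - 1 / 6 = 5 / 6 by norm_num] at h
  rw [show (5 / 36 : ℝ) = 1 / 6 * (5 / 6) by norm_num, h]
  field_simp
  ring
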